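/- arXiv:1810.08295 — 2 statements merged into one kernel-verified Lean document; each statement's English description precedes it below -/
import Mathlib

section
/- Let α, v, w > 0, N a nonnegative integer, and n a nonzero integer such that e^{2πinw/v} ≠ 1. Then the function F(z) = z^{s−1} e^{−(α+vN+wN)z} / ((e^{vz}−1)(e^{wz}−1)) has a simple pole at z = 2πin/v with residue (1/v)(2πin/v)^{s−1} e^{−(α+wN)·2πin/v} / (e^{2πinw/v} − 1). -/
open Complex Filter Topology Real

theorem simple_pole_residue (α v w : ℝ) (hα : 0 < α) (hv : 0 < v) (hw : 0 < w)
    (N : ℕ) (s : ℂ) (n : ℤ) (hn : n ≠ 0)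
    (hnw : Complex.exp (2 * Real.pi * I * n * w / v) ≠ 1) :
    Tendsto (fun z : ℂ =>
        (z - 2 * Real.pi * I * n / v) *
          (z ^ (s - 1) * Complex.exp (-(((α + v * N + w * N : ℝ) : ℂ)) * z) /
            ((Complex.exp (v * z) - 1) * (Complex.exp (w * z) - 1))))
      (𝓝[≠] (2 * Real.pi * I * n / v))
      (𝓝 ((1 / (v : ℂ)) * (2 * Real.pi * I * n / v) ^ (s - 1) *
        Complex.exp (-(((α + w * N : ℝ) : ℂ)) * (2 * Real.pi * I * n / v)) /
          (Complex.exp (2 * Real.pi * I * n * w / v) - 1)))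
    ∧ (1 / (v : ℂ)) * (2 * Real.pi * I * n / v) ^ (s - 1) *
        Complex.exp (-(((α + w * N : ℝ) : ℂ)) * (2 * Real.pi * I * n / v)) /
          (Complex.exp (2 * Real.pi * I * n * w / v) - 1) ≠ 0 := by
  have hvC : (v : ℂ) ≠ 0 := Complex.ofReal_ne_zero.mpr hv.ne'
  have hnC : (n : ℂ) ≠ 0 := Int.cast_ne_zero.mpr hn
  set c : ℂ := 2 * Real.pi * I * n / v with hc
  have hcI : c = ((2 * Real.pi * n / v : ℝ) : ℂ) * I := by
    rw [hc]; push_cast; ring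
  have hre : (2 * Real.pi * n / v : ℝ) ≠ 0 := by
    apply div_ne_zero _ hv.ne'
    apply mul_ne_zero (by positivity) (Int.cast_ne_zero.mpr hn)
  have him : c.im ≠ 0 := by
    rw [hcI]; simpa using hre
  have hc0 : c ≠ 0 := by
    intro h
    apply him
    rw [h]; simp
  have hvc : (v : ℂ) * c = (n : ℂ) * (2 * Real.pi * I) := by
    rw [hc]; field_simp
  have hexpvc : Complex.exp ((v : ℂ) * c) = 1 := by
    rw [hvc]; exact Complex.exp_int_mul_two_pi_mul_I n
  have hwc : (w : ℂ) * c = 2 * Real.pi * I * n * w / v := by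
    rw [hc]; ring
  have hden : Complex.exp ((w : ℂ) * c) - 1 ≠ 0 := by
    rw [hwc]; exact sub_ne_zero.mpr hnw
  have hAc : Complex.exp (-(((α + v * N + w * N : ℝ) : ℂ)) * c)
      = Complex.exp (-(((α + w * N : ℝ) : ℂ)) * c) := by
    have e1 : -(((α + v * N + w * N : ℝ) : ℂ)) * c
        = -(((α + w * N : ℝ) : ℂ)) * c + ((-(N * n) : ℤ) : ℂ) * (2 * Real.pi * I) := by
      push_cast
      linear_combination (-(N : ℂ)) * hvc
    rw [e1, Complex.exp_add, Complex.exp_int_mul_two_pi_mul_I, mul_one]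
  -- limit of (z - c)/(exp (v z) - 1)
  have hd : HasDerivAt (fun z : ℂ => Complex.exp ((v : ℂ) * z) - 1) (v : ℂ) c := by
    have h1 := (((hasDerivAt_id c).const_mul (v : ℂ)).cexp).sub_const 1
    simpa [hexpvc] using h1
  have lim1 : Tendsto (fun z : ℂ => (z - c) / (Complex.exp ((v : ℂ) * z) - 1))
      (𝓝[≠] c) (𝓝 (1 / (v : ℂ))) := by
    have h2 := (hasDerivAt_iff_tendsto_slope.mp hd).inv₀ hvC
    rw [show (v : ℂ)⁻¹ = 1 / (v : ℂ) by rw [one_div]] at h2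
    refine h2.congr fun z => ?_
    rw [slope_def_field]
    simp [hexpvc, inv_div]
  have cont : ContinuousAt (fun z : ℂ =>
      z ^ (s - 1) * Complex.exp (-(((α + v * N + w * N : ℝ) : ℂ)) * z) /
        (Complex.exp ((w : ℂ) * z) - 1)) c := by
    apply ContinuousAt.div
    · exact (continuousAt_cpow_const (Or.inr him)).mul (by fun_prop)
    · fun_prop
    · exact hden
  have lim2 := cont.tendsto.mono_left (nhdsWithin_le_nhds (s := {c}ᶜ))
  have final := lim1.mul lim2
  have hval : 1 / (v : ℂ) *
      (c ^ (s - 1) * Complex.exp (-(((α + v * N + w * N : ℝ) : ℂ)) * c) /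
        (Complex.exp ((w : ℂ) * c) - 1))
      = 1 / (v : ℂ) * c ^ (s - 1) * Complex.exp (-(((α + w * N : ℝ) : ℂ)) * c) /
          (Complex.exp (2 * Real.pi * I * n * w / v) - 1) := by
    rw [hAc, hwc]; ring
  constructor
  · rw [← hval]
    refine final.congr fun z => ?_
    rw [div_mul_div_comm, mul_div_assoc]
  · rw [← hval]
    apply mul_ne_zero (one_div_ne_zero hvC)
    apply div_ne_zero _ hden
    apply mul_ne_zero _ (Complex.exp_ne_zero _)
    simp only [ne_eq, Complex.cpow_eq_zero_iff, not_and_or, not_not]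
    exact Or.inl hc0
end

section
/- Let f : [a, b] → ℝ be twice differentiable with 0 < Λ ≤ f''(x) ≤ cΛ for all x ∈ [a, b], where b ≥ a + 1 and c > 1. Then |∑_{a < n ≤ b} e^{2πi f(n)}| ≤ C (c (b − a) Λ^{1/2} + Λ^{−1/2}) for an absolute constant C. -/
/-!
For `Λ ≥ 1` the trivial bound suffices. Otherwise put `δ = √Λ`. Since `f'' ≥ Λ`, the derivative
`f'` is increasing, and it increases by at most `cΛ(b - a)` over `[a, b]`; cut `[a, b]` at the
points where `f'` crosses `m ± δ`, `m ∈ ℤ`. Where `f'` stays within `δ` of an integer, the piece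
has length at most `2δ/Λ = 2/δ` and the trivial bound applies. Where `m + δ ≤ f' ≤ m + 1 - δ`,
the phases `u n = f n - m n` have monotone increments `f'(ξ) - m ∈ [δ, 1 - δ]`, and the
Kusmin–Landau inequality bounds the sum by `O(1/δ)`: since
`1 / (e(φ) - 1) = -1/2 - (i/2) cot πφ`, each term `e(u n)` is, up to a telescoping term, the
difference `e(u (n+1)) - e(u n)` weighted by a bounded monotone sequence, and summation by parts
controls such sums. There are at most `cΛ(b - a) + 2` pieces of each kind.
-/

open Complex

open Finset

namespace Real

theorem antitoneOn_cot : AntitoneOn Real.cot (Set.Ioo 0 π) := by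
  have h : ∀ x, Real.cot x = Real.tan (π / 2 - x) := fun x => by
    rw [Real.tan_eq_sin_div_cos, Real.sin_pi_div_two_sub, Real.cos_pi_div_two_sub,
      Real.cot_eq_cos_div_sin]
  intro s hs t ht hst
  rw [h, h]
  exact Real.strictMonoOn_tan.monotoneOn ⟨by linarith [ht.2], by linarith [ht.1]⟩
    ⟨by linarith [hs.2], by linarith [hs.1]⟩ (by linarith)

theorem abs_cot_le_one_div_sin {x : ℝ} (hx : 0 < Real.sin x) :
    |Real.cot x| ≤ 1 / Real.sin x := by
  rw [Real.cot_eq_cos_div_sin, abs_div, abs_of_pos hx]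
  exact div_le_div_of_nonneg_right (Real.abs_cos_le_one x) hx.le

theorem two_mul_min_le_sin_pi_mul {φ : ℝ} (h₀ : 0 ≤ φ) (h₁ : φ ≤ 1) :
    2 * min φ (1 - φ) ≤ Real.sin (π * φ) := by
  have jordan : ∀ ψ, 0 ≤ ψ → ψ ≤ 1 / 2 → 2 * ψ ≤ Real.sin (π * ψ) := fun ψ h0 h1 => by
    have := Real.mul_le_sin (x := π * ψ) (by positivity) (by nlinarith [Real.pi_pos])
    rwa [← mul_assoc, div_mul_cancel₀ _ Real.pi_ne_zero] at this
  rcases le_total φ (1 / 2) with h | h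
  · exact (mul_le_mul_of_nonneg_left (min_le_left _ _) two_pos.le).trans (jordan φ h₀ h)
  · rw [← Real.sin_pi_sub, ← mul_one_sub]
    exact (mul_le_mul_of_nonneg_left (min_le_right _ _) two_pos.le).trans
      (jordan _ (by linarith) (by linarith))

theorem abs_cot_pi_mul_le {φ δ : ℝ} (hδ : 0 < δ) (hφ : φ ∈ Set.Icc δ (1 - δ)) :
    |Real.cot (π * φ)| ≤ 1 / (2 * δ) := by
  have hsin : 2 * δ ≤ Real.sin (π * φ) :=
    (mul_le_mul_of_nonneg_left (le_min hφ.1 (by linarith [hφ.2])) two_pos.le).trans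
      (two_mul_min_le_sin_pi_mul (by linarith [hφ.1]) (by linarith [hφ.2]))
  exact (abs_cot_le_one_div_sin (by linarith)).trans
    (one_div_le_one_div_of_le (by positivity) hsin)

end Real

section SummationByParts

variable {E : Type*} [SeminormedAddCommGroup E]

theorem Int.sum_Ico_sub (g : ℤ → E) {M N : ℤ} (h : M ≤ N) :
    ∑ n ∈ Ico M N, (g (n + 1) - g n) = g N - g M := by
  induction N, h using Int.leInduction with
  | base => simp
  | succ N hMN ih =>
    rw [← insert_Ico_right_eq_Ico_add_one hMN, sum_insert right_notMem_Ico, ih]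
    abel

variable [NormedSpace ℝ E]

theorem Int.norm_sum_smul_sub_sub_le_of_antitoneOn {g : ℤ → E} {w : ℤ → ℝ} {M N : ℤ}
    (hg : ∀ n, ‖g n‖ ≤ 1) (hMN : M < N) (hw : AntitoneOn w (Set.Ico M N)) :
    ‖∑ n ∈ Ico M N, w n • (g (n + 1) - g n) - (w (N - 1) • g N - w M • g M)‖
      ≤ w M - w (N - 1) := by
  induction N, (hMN : M + 1 ≤ N) using Int.leInduction with
  | base => simp [Ico_add_one_right_eq_Icc, smul_sub]
  | succ N hMN ih =>
    have hstep : w N ≤ w (N - 1) := hw ⟨by omega, by omega⟩ ⟨by omega, by omega⟩ (by omega)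
    rw [← insert_Ico_right_eq_Ico_add_one (by omega), sum_insert right_notMem_Ico,
      add_sub_cancel_right]
    calc _ = ‖(∑ n ∈ Ico M N, w n • (g (n + 1) - g n) - (w (N - 1) • g N - w M • g M))
            + (w (N - 1) - w N) • g N‖ := by rw [sub_smul, smul_sub]; congr 1; abel
      _ ≤ (w M - w (N - 1)) + (w (N - 1) - w N) := by
        refine norm_add_le_of_le (ih (hw.mono (Set.Ico_subset_Ico_right (by omega)))) ?_
        rw [norm_smul, Real.norm_of_nonneg (sub_nonneg.mpr hstep)]
        exact mul_le_of_le_one_right (sub_nonneg.mpr hstep) (hg N)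
      _ = w M - w N := by ring

theorem Int.norm_sum_smul_sub_le_of_antitoneOn {g : ℤ → E} {w : ℤ → ℝ} {M N : ℤ} {W : ℝ}
    (hg : ∀ n, ‖g n‖ ≤ 1) (hw : AntitoneOn w (Set.Ico M N))
    (hW : ∀ n ∈ Set.Ico M N, |w n| ≤ W) (hW₀ : 0 ≤ W) :
    ‖∑ n ∈ Ico M N, w n • (g (n + 1) - g n)‖ ≤ 4 * W := by
  rcases le_or_gt N M with hNM | hMN
  · rw [Ico_eq_empty_of_le hNM, sum_empty, norm_zero]; positivity
  have hsmul : ∀ n k, ‖w n • g k‖ ≤ |w n| := fun n k => by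
    rw [norm_smul, Real.norm_eq_abs]; exact mul_le_of_le_one_right (abs_nonneg _) (hg k)
  have hM := hW M ⟨le_rfl, hMN⟩
  have hN := hW (N - 1) ⟨by omega, by omega⟩
  calc _ ≤ (|w (N - 1)| + |w M|) + (w M - w (N - 1)) :=
        (norm_le_norm_add_norm_sub' _ (w (N - 1) • g N - w M • g M)).trans <|
          add_le_add (norm_sub_le_of_le (hsmul _ _) (hsmul _ _))
            (Int.norm_sum_smul_sub_sub_le_of_antitoneOn hg hMN hw)
    _ ≤ 4 * W := by linarith [le_abs_self (w M), neg_abs_le (w (N - 1))]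

end SummationByParts

namespace VanDerCorput

open Real

noncomputable def e (t : ℝ) : ℂ := exp (2 * π * I * t)

theorem norm_e (t : ℝ) : ‖e t‖ = 1 := by
  rw [e, norm_exp]; simp

theorem e_add (s t : ℝ) : e (s + t) = e s * e t := by
  rw [e, e, e, ← Complex.exp_add]; push_cast; ring_nf

theorem e_intCast (n : ℤ) : e n = 1 := by
  rw [e, ← exp_int_mul_two_pi_mul_I n]; push_cast; ring_nf

theorem e_add_intCast (t : ℝ) (k : ℤ) : e (t + k) = e t := by
  rw [e_add, e_intCast, mul_one]

theorem e_ne_one {φ : ℝ} (h₀ : 0 < φ) (h₁ : φ < 1) : e φ ≠ 1 := by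
  rw [e, Ne, Complex.exp_eq_one_iff]
  rintro ⟨n, hn⟩
  have : (φ : ℂ) = n := mul_left_cancel₀ (by simp [pi_ne_zero]) (hn.trans (mul_comm _ _))
  norm_cast at this
  rw [this] at h₀ h₁
  norm_cast at h₀ h₁
  omega

theorem e_eq_inv_mul_sub {s t : ℝ} (h : e (t - s) ≠ 1) :
    e s = (e (t - s) - 1)⁻¹ * (e t - e s) := by
  rw [show e t = e s * e (t - s) by rw [← e_add, add_sub_cancel], ← mul_sub_one, mul_comm,
    mul_assoc, mul_inv_cancel₀ (sub_ne_zero.mpr h), mul_one]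

theorem inv_e_sub_one {φ : ℝ} (hφ : e φ ≠ 1) :
    (e φ - 1)⁻¹ = -(1 / 2) - I / 2 * (Real.cot (π * φ) : ℂ) := by
  rw [ofReal_cot, ofReal_mul, Complex.cot_pi_eq_exp_ratio, ← e]
  field_simp
  ring

theorem norm_sum_e_le_of_monotoneOn_sub {u : ℤ → ℝ} {A B : ℤ} {δ : ℝ} (hδ : 0 < δ)
    (hmono : MonotoneOn (fun n => u (n + 1) - u n) (Set.Ioo A B))
    (hmem : ∀ n ∈ Set.Ioo A B, u (n + 1) - u n ∈ Set.Icc δ (1 - δ)) :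
    ‖∑ n ∈ Ioc A B, e (u n)‖ ≤ 2 + 1 / δ := by
  rcases le_or_gt B A with hBA | hAB
  · rw [Ioc_eq_empty_of_le hBA, sum_empty, norm_zero]; positivity
  set φ : ℤ → ℝ := fun n => u (n + 1) - u n
  set w : ℤ → ℝ := fun n => Real.cot (π * φ n)
  set g : ℤ → ℂ := fun n => e (u n)
  have hg : ∀ n, ‖g n‖ ≤ 1 := fun n => (norm_e _).le
  have hφ : ∀ n ∈ Set.Ioo A B, 0 < φ n ∧ φ n < 1 := fun n hn =>
    ⟨hδ.trans_le (hmem n hn).1, by linarith [(hmem n hn).2]⟩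
  have hw : AntitoneOn w (Set.Ico (A + 1) B) := by
    have hmaps : ∀ n ∈ Set.Ioo A B, π * φ n ∈ Set.Ioo 0 π := fun n hn =>
      ⟨mul_pos pi_pos (hφ n hn).1, by nlinarith [pi_pos, (hφ n hn).2]⟩
    rw [Set.Ico_add_one_left_eq_Ioo]
    exact fun p hp q hq hpq => antitoneOn_cot (hmaps p hp) (hmaps q hq)
      (mul_le_mul_of_nonneg_left (hmono hp hq hpq) pi_pos.le)
  have hW : ∀ n ∈ Set.Ico (A + 1) B, |w n| ≤ 1 / (2 * δ) := fun n hn =>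
    abs_cot_pi_mul_le hδ (hmem n (by rwa [Set.Ico_add_one_left_eq_Ioo] at hn))
  have hterm : ∀ n ∈ Ico (A + 1) B,
      g n = -(1 / 2) * (g (n + 1) - g n) - I / 2 * (w n • (g (n + 1) - g n)) := fun n hn => by
    rw [Ico_add_one_left_eq_Ioo, mem_Ioo] at hn
    have hne := e_ne_one (hφ n hn).1 (hφ n hn).2
    have h := e_eq_inv_mul_sub hne
    rw [inv_e_sub_one hne] at h
    rw [Complex.real_smul]
    linear_combination h
  rw [← Ioo_insert_right hAB, sum_insert right_notMem_Ioo, ← Ico_add_one_left_eq_Ioo,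
    sum_congr rfl hterm, sum_sub_distrib, ← mul_sum, ← mul_sum, Int.sum_Ico_sub g hAB]
  calc _ ≤ ‖g B‖ + (‖-(1 / 2) * (g B - g (A + 1))‖
          + ‖I / 2 * ∑ n ∈ Ico (A + 1) B, w n • (g (n + 1) - g n)‖) :=
        norm_add_le_of_le le_rfl (norm_sub_le _ _)
    _ ≤ 1 + (1 / 2 * 2 + 1 / 2 * (4 * (1 / (2 * δ)))) := by
      rw [norm_mul, norm_mul, norm_div, norm_neg, norm_I]
      gcongr
      · exact hg B
      · norm_num
      · exact (norm_sub_le _ _).trans (by linarith [hg B, hg (A + 1)])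
      · norm_num
      · exact Int.norm_sum_smul_sub_le_of_antitoneOn hg hw hW (by positivity)
    _ = 2 + 1 / δ := by field_simp; ring

noncomputable def expSum (f : ℝ → ℝ) (x y : ℝ) : ℂ := ∑ n ∈ Ioc ⌊x⌋ ⌊y⌋, e (f n)

theorem expSum_add (f : ℝ → ℝ) {x y z : ℝ} (hxy : x ≤ y) (hyz : y ≤ z) :
    expSum f x y + expSum f y z = expSum f x z := by
  rw [expSum, expSum, expSum, ← sum_union (Ioc_disjoint_Ioc_of_le le_rfl),
    Ioc_union_Ioc_eq_Ioc (Int.floor_mono hxy) (Int.floor_mono hyz)]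

theorem norm_expSum_le (f : ℝ → ℝ) {x y : ℝ} (hxy : x ≤ y) : ‖expSum f x y‖ ≤ y - x + 1 := by
  calc ‖expSum f x y‖ ≤ ∑ n ∈ Ioc ⌊x⌋ ⌊y⌋, ‖e (f n)‖ := norm_sum_le _ _
    _ = ((⌊y⌋ - ⌊x⌋ : ℤ) : ℝ) := by
      simp only [norm_e, sum_const, nsmul_eq_mul, mul_one]
      exact_mod_cast Int.card_Ioc_of_le _ _ (Int.floor_mono hxy)
    _ ≤ y - x + 1 := by
      push_cast
      linarith [Int.floor_le y, Int.lt_floor_add_one x]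

variable {f f' : ℝ → ℝ} {s : Set ℝ} {x y Λ δ : ℝ}

theorem norm_expSum_le_of_monotoneOn_deriv (hf : ∀ t ∈ s, HasDerivAt f (f' t) t)
    (hmono : MonotoneOn f' s) (hs : Set.Icc x y ⊆ s) (hδ : 0 < δ) (m : ℤ)
    (hx : m + δ ≤ f' x) (hy : f' y ≤ m + 1 - δ) : ‖expSum f x y‖ ≤ 2 + 1 / δ := by
  have hmvt : ∀ n ∈ Set.Ioo ⌊x⌋ ⌊y⌋, ∃ ξ ∈ Set.Icc x y,
      n < ξ ∧ ξ < n + 1 ∧ f (n + 1) - f n = f' ξ := fun n hn => by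
    have hxn : x < n := Int.floor_lt.mp hn.1
    have hny : (n : ℝ) + 1 ≤ y := by exact_mod_cast Int.le_floor.mp (Int.add_one_le_iff.mpr hn.2)
    have hsub : Set.Icc (n : ℝ) (n + 1) ⊆ s := (Set.Icc_subset_Icc hxn.le hny).trans hs
    obtain ⟨ξ, hξ, hslope⟩ := exists_hasDerivAt_eq_slope f f' (lt_add_one (n : ℝ))
      (fun t ht => (hf t (hsub ht)).continuousAt.continuousWithinAt)
      (fun t ht => hf t (hsub (Set.Ioo_subset_Icc_self ht)))
    refine ⟨ξ, ⟨by linarith [hξ.1], by linarith [hξ.2]⟩, hξ.1, hξ.2, ?_⟩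
    rw [hslope, add_sub_cancel_left, div_one]
  have hsum : expSum f x y = ∑ n ∈ Ioc ⌊x⌋ ⌊y⌋, e (f n - m * n) :=
    sum_congr rfl fun n _ => by simpa using e_add_intCast (f n - m * n) (m * n)
  have hdiff : ∀ n : ℤ, f (n + 1) - m * (n + 1) - (f n - m * n) = f (n + 1) - f n - m := by
    intro n; ring
  rw [hsum]
  refine norm_sum_e_le_of_monotoneOn_sub hδ (fun p hp q hq hpq => ?_) (fun n hn => ?_)
  · rcases hpq.eq_or_lt with rfl | hlt
    · rfl
    obtain ⟨ξ, hξ, -, hξp, hp'⟩ := hmvt p hp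
    obtain ⟨η, hη, hqη, -, hq'⟩ := hmvt q hq
    have : (p : ℝ) + 1 ≤ q := by exact_mod_cast hlt
    simp only [Int.cast_add, Int.cast_one, hdiff, hp', hq']
    linarith [hmono (hs hξ) (hs hη) (by linarith)]
  · obtain ⟨ξ, hξ, -, -, h⟩ := hmvt n hn
    simp only [Int.cast_add, Int.cast_one, hdiff, h]
    constructor
    · linarith [hmono (hs ⟨le_rfl, hξ.1.trans hξ.2⟩) (hs hξ) hξ.1]
    · linarith [hmono (hs hξ) (hs ⟨hξ.1.trans hξ.2, le_rfl⟩) hξ.2]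

theorem norm_expSum_le_of_deriv_mem_Icc (hf : ∀ t ∈ s, HasDerivAt f (f' t) t)
    (hΛ : ∀ t ∈ s, ∀ t' ∈ s, t ≤ t' → Λ * (t' - t) ≤ f' t' - f' t) (hΛ₀ : 0 < Λ)
    (hxy : x ≤ y) (hs : Set.Icc x y ⊆ s) (hδ : 0 < δ) (m : ℤ)
    (hx : m - δ ≤ f' x) (hy : f' y ≤ m + 1 - δ) :
    ‖expSum f x y‖ ≤ 2 * δ / Λ + 3 + 1 / δ := by
  have hmono : MonotoneOn f' s := fun t ht t' ht' htt' =>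
    sub_nonneg.mp ((mul_nonneg hΛ₀.le (sub_nonneg.mpr htt')).trans (hΛ t ht t' ht' htt'))
  have near : ∀ z, x ≤ z → z ≤ y → f' z ≤ m + δ → ‖expSum f x z‖ ≤ 2 * δ / Λ + 1 :=
    fun z hxz hzy hz => by
      have hgrowth := hΛ x (hs ⟨le_rfl, hxy⟩) z (hs ⟨hxz, hzy⟩) hxz
      have : z - x ≤ 2 * δ / Λ := by rw [le_div_iff₀ hΛ₀]; linarith
      linarith [norm_expSum_le f hxz]
  have far : ∀ z, x ≤ z → m + δ ≤ f' z → ‖expSum f z y‖ ≤ 2 + 1 / δ := fun z hxz hz =>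
    norm_expSum_le_of_monotoneOn_deriv hf hmono ((Set.Icc_subset_Icc_left hxz).trans hs) hδ m
      hz hy
  rcases le_total (f' y) (m + δ) with hy' | hy'
  · linarith [near y hxy le_rfl hy', one_div_pos.mpr hδ]
  rcases le_total (m + δ) (f' x) with hx' | hx'
  · linarith [far x le_rfl hx', div_pos (mul_pos two_pos hδ) hΛ₀]
  obtain ⟨z, hz, hfz⟩ := exists_hasDerivWithinAt_eq_of_ge_of_le hxy
    (fun t ht => (hf t (hs ht)).hasDerivWithinAt) hx' hy'
  rw [← expSum_add f hz.1 hz.2]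
  linarith [norm_add_le (expSum f x z) (expSum f z y), near z hz.1 hz.2 hfz.le,
    far z hz.1 hfz.ge]

theorem norm_expSum_le_of_deriv_mem_Icc_add (hf : ∀ t ∈ s, HasDerivAt f (f' t) t)
    (hΛ : ∀ t ∈ s, ∀ t' ∈ s, t ≤ t' → Λ * (t' - t) ≤ f' t' - f' t) (hΛ₀ : 0 < Λ)
    (hδ : 0 < δ) (D : ℕ) (m : ℤ) (hxy : x ≤ y) (hs : Set.Icc x y ⊆ s)
    (hx : m - δ ≤ f' x) (hy : f' y ≤ m + D + 1 - δ) :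
    ‖expSum f x y‖ ≤ (D + 1) * (2 * δ / Λ + 3 + 1 / δ) := by
  have hK : 0 ≤ 2 * δ / Λ + 3 + 1 / δ := by positivity
  induction D generalizing m x with
  | zero =>
    simpa using norm_expSum_le_of_deriv_mem_Icc hf hΛ hΛ₀ hxy hs hδ m hx (by simpa using hy)
  | succ D ih =>
    push_cast at hy ⊢
    rcases le_total (f' y) (m + 1 - δ) with hy' | hy'
    · nlinarith [norm_expSum_le_of_deriv_mem_Icc hf hΛ hΛ₀ hxy hs hδ m hx hy']
    rcases le_total (m + 1 - δ) (f' x) with hx' | hx'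
    · have := ih (m + 1) hxy hs (by push_cast; linarith) (by push_cast; linarith)
      nlinarith
    obtain ⟨z, hz, hfz⟩ := exists_hasDerivWithinAt_eq_of_ge_of_le hxy
      (fun t ht => (hf t (hs ht)).hasDerivWithinAt) hx' hy'
    rw [← expSum_add f hz.1 hz.2]
    have h₁ := norm_expSum_le_of_deriv_mem_Icc hf hΛ hΛ₀ hz.1
      ((Set.Icc_subset_Icc_right hz.2).trans hs) hδ m hx hfz.le
    have h₂ := ih (m + 1) hz.2 ((Set.Icc_subset_Icc_left hz.1).trans hs)
      (by push_cast; linarith) (by push_cast; linarith)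
    nlinarith [norm_add_le (expSum f x z) (expSum f z y)]

theorem norm_expSum_le_of_mul_sub_le_deriv_sub (hf : ∀ t ∈ s, HasDerivAt f (f' t) t)
    (hΛ : ∀ t ∈ s, ∀ t' ∈ s, t ≤ t' → Λ * (t' - t) ≤ f' t' - f' t) (hΛ₀ : 0 < Λ)
    (hδ : 0 < δ) (hxy : x ≤ y) (hs : Set.Icc x y ⊆ s) :
    ‖expSum f x y‖ ≤ (f' y - f' x + 2) * (2 * δ / Λ + 3 + 1 / δ) := by
  have hgrowth : 0 ≤ f' y - f' x := (mul_nonneg hΛ₀.le (sub_nonneg.mpr hxy)).trans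
    (hΛ x (hs ⟨le_rfl, hxy⟩) y (hs ⟨hxy, le_rfl⟩) hxy)
  have hD := Nat.le_ceil (f' y - f' x)
  have hD' := Nat.ceil_lt_add_one hgrowth
  have hm := Int.lt_floor_add_one (f' x + δ)
  refine (norm_expSum_le_of_deriv_mem_Icc_add hf hΛ hΛ₀ hδ ⌈f' y - f' x⌉₊ ⌊f' x + δ⌋ hxy hs
    (by linarith [Int.floor_le (f' x + δ)]) (by linarith)).trans
    (mul_le_mul_of_nonneg_right (by linarith) (by positivity))

theorem norm_expSum_le_sqrt {c : ℝ} (hf : ∀ t ∈ Set.Icc x y, HasDerivAt f (f' t) t)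
    (hΛ : ∀ t ∈ Set.Icc x y, ∀ t' ∈ Set.Icc x y, t ≤ t' → Λ * (t' - t) ≤ f' t' - f' t)
    (hup : f' y - f' x ≤ c * Λ * (y - x)) (hΛ₀ : 0 < Λ) (hxy : x + 1 ≤ y) (hc : 1 ≤ c) :
    ‖expSum f x y‖ ≤ 12 * (c * (y - x) * √Λ + (√Λ)⁻¹) := by
  set δ := √Λ
  have hδ : 0 < δ := Real.sqrt_pos.mpr hΛ₀
  have hδΛ : δ ^ 2 = Λ := Real.sq_sqrt hΛ₀.le
  have hcyx : 0 ≤ c * (y - x) := mul_nonneg (by linarith) (by linarith)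
  rcases le_or_gt 1 Λ with hΛ₁ | hΛ₁
  · have hcδ : 1 ≤ c * δ := one_le_mul_of_one_le_of_one_le hc (Real.one_le_sqrt.mpr hΛ₁)
    have : y - x ≤ c * (y - x) * δ := by nlinarith
    linarith [norm_expSum_le f (by linarith : x ≤ y), inv_pos.mpr hδ]
  have hK : 2 * δ / Λ + 3 + 1 / δ ≤ 6 * δ⁻¹ := by
    have h₁ : 1 < δ⁻¹ := (one_lt_inv₀ hδ).mpr (by nlinarith)
    have h₂ : 2 * δ / Λ = 2 * δ⁻¹ := by rw [← hδΛ]; field_simp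
    rw [h₂, one_div]
    linarith
  calc ‖expSum f x y‖ ≤ (f' y - f' x + 2) * (2 * δ / Λ + 3 + 1 / δ) :=
        norm_expSum_le_of_mul_sub_le_deriv_sub hf hΛ hΛ₀ hδ (by linarith) subset_rfl
    _ ≤ (c * δ ^ 2 * (y - x) + 2) * (6 * δ⁻¹) :=
      mul_le_mul (by rw [hδΛ]; linarith) hK (by positivity)
        (by linarith [mul_nonneg hcyx (sq_nonneg δ)])
    _ = 6 * (c * (y - x) * δ) + 12 * δ⁻¹ := by field_simp; ring
    _ ≤ 12 * (c * (y - x) * δ + δ⁻¹) := by linarith [mul_nonneg hcyx hδ.le, inv_pos.mpr hδ]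

end VanDerCorput

theorem van_der_corput_second_derivative :
    ∃ C : ℝ, 0 < C ∧ ∀ (a b c Λ : ℝ) (f : ℝ → ℝ),
      a + 1 ≤ b → 1 < c → 0 < Λ →
      (∀ x ∈ Set.Icc a b, DifferentiableAt ℝ f x ∧ DifferentiableAt ℝ (deriv f) x) →
      (∀ x ∈ Set.Icc a b, Λ ≤ deriv (deriv f) x ∧ deriv (deriv f) x ≤ c * Λ) →
      ‖∑ n ∈ Finset.Ioc ⌊a⌋ ⌊b⌋, Complex.exp (2 * Real.pi * I * (f n))‖
        ≤ C * (c * (b - a) * Λ ^ ((1 : ℝ) / 2) + Λ ^ (-(1 : ℝ) / 2)) := by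
  refine ⟨12, by norm_num, fun a b c Λ f hab hc hΛ hdiff hbound => ?_⟩
  have hab' : a ≤ b := by linarith
  have hcont : ContinuousOn (deriv f) (Set.Icc a b) := fun t ht =>
    (hdiff t ht).2.continuousAt.continuousWithinAt
  have hdiffOn : DifferentiableOn ℝ (deriv f) (interior (Set.Icc a b)) := fun t ht =>
    (hdiff t (interior_subset ht)).2.differentiableWithinAt
  have hlow := (convex_Icc a b).mul_sub_le_image_sub_of_le_deriv hcont hdiffOn
    fun t ht => (hbound t (interior_subset ht)).1
  have hup := (convex_Icc a b).image_sub_le_mul_sub_of_deriv_le hcont hdiffOn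
    (fun t ht => (hbound t (interior_subset ht)).2) a ⟨le_rfl, hab'⟩ b ⟨hab', le_rfl⟩ hab'
  rw [← Real.sqrt_eq_rpow, neg_div, Real.rpow_neg hΛ.le, ← Real.sqrt_eq_rpow]
  exact VanDerCorput.norm_expSum_le_sqrt (fun t ht => (hdiff t ht).1.hasDerivAt) hlow hup hΛ
    hab hc.le
end
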